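/- arXiv:2304.00088 — 2 statements merged into one kernel-verified Lean document; each statement's English description precedes it below -/
import Mathlib

section
/- Let φ be a smooth compactly supported function on 2d Minkowski space and define Eφ(z) = (4/l²)(−(1/2)φ(z) + E₂ − 2E₃ + E₄), where for n = 2,3,4, Eₙ = ρⁿ⁻¹/(n−2)! ∫_{J⁻(z)} e^{-ρV[y,z]} V[y,z]^{n−2} φ(y) d²y with ρ = 1/l² and V[y,z] = uv in light-cone coordinates of y relative to z. Then Eφ(z) = □φ(z) + (1/2)∫_{J⁻(z)} e^{-ρV[y,z]} □□φ(y) d²y, where □ = −2∂_u∂_v. -/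
set_option autoImplicit false

open MeasureTheory Real Set

/-- The 2d flat d'Alembertian in light-cone coordinates: `□ = -2 ∂_u ∂_v`. -/
noncomputable def boxOp (φ : ℝ × ℝ → ℝ) : ℝ × ℝ → ℝ :=
  fun p => -2 * deriv (fun a => deriv (fun b => φ (a, b)) p.2) p.1

noncomputable def pd1 (f : ℝ × ℝ → ℝ) : ℝ × ℝ → ℝ :=
  fun p => deriv (fun a => f (a, p.2)) p.1

noncomputable def pd2 (f : ℝ × ℝ → ℝ) : ℝ × ℝ → ℝ :=
  fun p => deriv (fun b => f (p.1, b)) p.2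

lemma hasDerivAt_slice1 {f : ℝ × ℝ → ℝ} (hf : Differentiable ℝ f) (u v : ℝ) :
    HasDerivAt (fun a => f (a, v)) (fderiv ℝ f (u, v) (1, 0)) u := by
  have h1 : HasDerivAt (fun a : ℝ => (a, v)) ((1 : ℝ), (0 : ℝ)) u :=
    (hasDerivAt_id u).prodMk (hasDerivAt_const u v)
  exact (hf (u, v)).hasFDerivAt.comp_hasDerivAt u h1

lemma hasDerivAt_slice2 {f : ℝ × ℝ → ℝ} (hf : Differentiable ℝ f) (u v : ℝ) :
    HasDerivAt (fun b => f (u, b)) (fderiv ℝ f (u, v) (0, 1)) v := by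
  have h1 : HasDerivAt (fun b : ℝ => (u, b)) ((0 : ℝ), (1 : ℝ)) v :=
    (hasDerivAt_const v u).prodMk (hasDerivAt_id v)
  exact (hf (u, v)).hasFDerivAt.comp_hasDerivAt v h1

lemma pd1_eq {f : ℝ × ℝ → ℝ} (hf : Differentiable ℝ f) :
    pd1 f = fun p => fderiv ℝ f p (1, 0) := by
  funext p
  exact (hasDerivAt_slice1 hf p.1 p.2).deriv

lemma pd2_eq {f : ℝ × ℝ → ℝ} (hf : Differentiable ℝ f) :
    pd2 f = fun p => fderiv ℝ f p (0, 1) := by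
  funext p
  exact (hasDerivAt_slice2 hf p.1 p.2).deriv

lemma contDiff_pd1 {f : ℝ × ℝ → ℝ} (hf : ContDiff ℝ (⊤ : ℕ∞) f) : ContDiff ℝ (⊤ : ℕ∞) (pd1 f) := by
  rw [pd1_eq (hf.differentiable (by simp))]
  exact (hf.fderiv_right (by simp)).clm_apply contDiff_const

lemma contDiff_pd2 {f : ℝ × ℝ → ℝ} (hf : ContDiff ℝ (⊤ : ℕ∞) f) : ContDiff ℝ (⊤ : ℕ∞) (pd2 f) := by
  rw [pd2_eq (hf.differentiable (by simp))]
  exact (hf.fderiv_right (by simp)).clm_apply contDiff_const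

lemma hcs_pd1 {f : ℝ × ℝ → ℝ} (hf : ContDiff ℝ (⊤ : ℕ∞) f) (hs : HasCompactSupport f) :
    HasCompactSupport (pd1 f) := by
  rw [pd1_eq (hf.differentiable (by simp))]
  exact hs.fderiv_apply (𝕜 := ℝ) (v := (1, 0))

lemma hcs_pd2 {f : ℝ × ℝ → ℝ} (hf : ContDiff ℝ (⊤ : ℕ∞) f) (hs : HasCompactSupport f) :
    HasCompactSupport (pd2 f) := by
  rw [pd2_eq (hf.differentiable (by simp))]
  exact hs.fderiv_apply (𝕜 := ℝ) (v := (0, 1))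

lemma pd_comm {f : ℝ × ℝ → ℝ} (hf : ContDiff ℝ (⊤ : ℕ∞) f) : pd1 (pd2 f) = pd2 (pd1 f) := by
  have hdf : Differentiable ℝ f := hf.differentiable (by simp)
  have h1 := contDiff_pd1 hf
  have h2 := contDiff_pd2 hf
  funext p
  have hsym := (hf.contDiffAt (x := p)).isSymmSndFDerivAt (by rw [minSmoothness_of_isRCLikeNormedField]; exact WithTop.coe_le_coe.mpr le_top)
  rw [pd1_eq (h2.differentiable (by simp)), pd2_eq (h1.differentiable (by simp)),
    pd2_eq hdf, pd1_eq hdf]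
  have hder : ContDiff ℝ (⊤ : ℕ∞) (fderiv ℝ f) := hf.fderiv_right (by simp)
  have e1 : (fderiv ℝ (fun q => fderiv ℝ f q (0, 1)) p) (1, 0)
      = fderiv ℝ (fderiv ℝ f) p (1, 0) (0, 1) := by
    have h : HasFDerivAt (fun q => fderiv ℝ f q (0, 1))
        ((ContinuousLinearMap.apply ℝ ℝ ((0:ℝ), (1:ℝ))).comp
          (fderiv ℝ (fderiv ℝ f) p)) p :=
      (ContinuousLinearMap.apply ℝ ℝ ((0:ℝ), (1:ℝ))).hasFDerivAt.comp p
        ((hder.differentiable (by simp)) p).hasFDerivAt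
    rw [h.fderiv]; rfl
  have e2 : (fderiv ℝ (fun q => fderiv ℝ f q (1, 0)) p) (0, 1)
      = fderiv ℝ (fderiv ℝ f) p (0, 1) (1, 0) := by
    have h : HasFDerivAt (fun q => fderiv ℝ f q (1, 0))
        ((ContinuousLinearMap.apply ℝ ℝ ((1:ℝ), (0:ℝ))).comp
          (fderiv ℝ (fderiv ℝ f) p)) p :=
      (ContinuousLinearMap.apply ℝ ℝ ((1:ℝ), (0:ℝ))).hasFDerivAt.comp p
        ((hder.differentiable (by simp)) p).hasFDerivAt
    rw [h.fderiv]; rfl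
  simp only []
  rw [e1, e2]
  exact (hsym (1,0) (0,1)).symm ▸ rfl

lemma isCE_mk_left (u : ℝ) : Topology.IsClosedEmbedding (fun v : ℝ => (u, v)) := by
  have : Isometry (fun v : ℝ => (u, v)) := by
    apply Isometry.of_dist_eq
    intro a b
    simp [Prod.dist_eq, dist_nonneg]
  exact this.isClosedEmbedding

lemma isCE_mk_right (v : ℝ) : Topology.IsClosedEmbedding (fun u : ℝ => (u, v)) := by
  have : Isometry (fun u : ℝ => (u, v)) := by
    apply Isometry.of_dist_eq
    intro a b
    simp [Prod.dist_eq, dist_nonneg]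
  exact this.isClosedEmbedding

lemma hcs_slice2 {f : ℝ × ℝ → ℝ} (hs : HasCompactSupport f) (u : ℝ) :
    HasCompactSupport (fun v => f (u, v)) :=
  hs.comp_isClosedEmbedding (isCE_mk_left u)

lemma hcs_slice1 {f : ℝ × ℝ → ℝ} (hs : HasCompactSupport f) (v : ℝ) :
    HasCompactSupport (fun u => f (u, v)) :=
  hs.comp_isClosedEmbedding (isCE_mk_right v)

lemma contDiff_slice2 {f : ℝ × ℝ → ℝ} (hf : ContDiff ℝ (⊤ : ℕ∞) f) (u : ℝ) :
    ContDiff ℝ (⊤ : ℕ∞) (fun v => f (u, v)) :=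
  hf.comp (contDiff_const.prodMk contDiff_id)

lemma contDiff_slice1 {f : ℝ × ℝ → ℝ} (hf : ContDiff ℝ (⊤ : ℕ∞) f) (v : ℝ) :
    ContDiff ℝ (⊤ : ℕ∞) (fun u => f (u, v)) :=
  hf.comp (contDiff_id.prodMk contDiff_const)

lemma integrableOn_kmul2 (k : ℝ → ℝ) (hk : Continuous k) {f : ℝ × ℝ → ℝ}
    (hf : ContDiff ℝ (⊤ : ℕ∞) f) (hs : HasCompactSupport f) (u : ℝ) :
    IntegrableOn (fun v => k v * f (u, v)) (Ioi (0:ℝ)) volume := by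
  have hc : Continuous (fun v => k v * f (u, v)) :=
    hk.mul ((contDiff_slice2 hf u).continuous)
  have hcs : HasCompactSupport (fun v => k v * f (u, v)) :=
    (hcs_slice2 hs u).mul_left
  exact (hc.integrable_of_hasCompactSupport hcs).integrableOn

lemma integrableOn_kmul1 (k : ℝ → ℝ) (hk : Continuous k) {f : ℝ × ℝ → ℝ}
    (hf : ContDiff ℝ (⊤ : ℕ∞) f) (hs : HasCompactSupport f) (v : ℝ) :
    IntegrableOn (fun u => k u * f (u, v)) (Ioi (0:ℝ)) volume := by
  have hc : Continuous (fun u => k u * f (u, v)) :=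
    hk.mul ((contDiff_slice1 hf v).continuous)
  have hcs : HasCompactSupport (fun u => k u * f (u, v)) :=
    (hcs_slice1 hs v).mul_left
  exact (hc.integrable_of_hasCompactSupport hcs).integrableOn

lemma hasDerivAt_poly_exp (c v : ℝ) (P P' : ℝ → ℝ) (hP : HasDerivAt P (P' v) v) :
    HasDerivAt (fun w => P w * Real.exp (-(c * w)))
      ((P' v - c * P v) * Real.exp (-(c * v))) v := by
  have he : HasDerivAt (fun w : ℝ => Real.exp (-(c * w)))
      (-c * Real.exp (-(c * v))) v := by
    have h1 : HasDerivAt (fun w : ℝ => -(c * w)) (-c) v := by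
      simpa [Pi.neg_def] using ((hasDerivAt_id v).const_mul c).neg
    have := h1.exp
    convert this using 1
    ring
  have := hP.mul he
  refine this.congr_deriv ?_
  ring

lemma hasDerivAt_pd2_slice {f : ℝ × ℝ → ℝ} (hf : ContDiff ℝ (⊤ : ℕ∞) f) (u v : ℝ) :
    HasDerivAt (fun w => f (u, w)) (pd2 f (u, v)) v :=
  ((contDiff_slice2 hf u).differentiable (by simp) v).hasDerivAt

lemma hasDerivAt_pd1_slice {f : ℝ × ℝ → ℝ} (hf : ContDiff ℝ (⊤ : ℕ∞) f) (u v : ℝ) :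
    HasDerivAt (fun w => f (w, v)) (pd1 f (u, v)) u :=
  ((contDiff_slice1 hf v).differentiable (by simp) u).hasDerivAt

lemma stepA (r : ℝ) {φ : ℝ × ℝ → ℝ} (hφ : ContDiff ℝ (⊤ : ℕ∞) φ) (hs : HasCompactSupport φ)
    (u : ℝ) :
    ∫ v in Ioi (0:ℝ),
        (r^2 * (2 - 4*(r*(u*v)) + (r*(u*v))^2) * Real.exp (-(r*(u*v)))) * φ (u, v)
      = ∫ v in Ioi (0:ℝ),
        (r^2 * v^2 * Real.exp (-(r*(u*v)))) * pd2 (pd2 φ) (u, v) := by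
  set c : ℝ := r * u with hc
  have hexp : ∀ w : ℝ, Real.exp (-(r*(u*w))) = Real.exp (-(c*w)) := by
    intro w; rw [hc, mul_assoc]
  -- the boundary function g
  set g : ℝ → ℝ := fun v =>
      (r^2 * (2*v - c*v^2) * Real.exp (-(c*v))) * φ (u, v)
    - (r^2 * v^2 * Real.exp (-(c*v))) * pd2 φ (u, v) with hg
  have hgderiv : ∀ v : ℝ, HasDerivAt g
      ((r^2 * (2 - 4*(c*v) + (c*v)^2) * Real.exp (-(c*v))) * φ (u, v)
        - (r^2 * v^2 * Real.exp (-(c*v))) * pd2 (pd2 φ) (u, v)) v := by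
    intro v
    have h1 : HasDerivAt (fun w : ℝ => r^2 * (2*w - c*w^2)) (r^2 * (2 - c*(2*v))) v := by
      have hw : HasDerivAt (fun w : ℝ => w) 1 v := hasDerivAt_id v
      have hw2 : HasDerivAt (fun w : ℝ => w^2) (2*v) v := by
        simpa using hasDerivAt_pow 2 v
      have := ((hw.const_mul 2).sub (hw2.const_mul c)).const_mul (r^2)
      refine this.congr_deriv ?_
      ring
    have hA' : HasDerivAt (fun w => (r^2 * (2*w - c*w^2)) * Real.exp (-(c*w)))
        ((r^2 * (2 - c*(2*v)) - c * (r^2 * (2*v - c*v^2))) * Real.exp (-(c*v))) v :=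
      hasDerivAt_poly_exp c v (fun w => r^2 * (2*w - c*w^2))
        (fun w => r^2 * (2 - c*(2*w))) h1
    have h0 : HasDerivAt (fun w : ℝ => r^2 * w^2) (r^2 * (2*v)) v := by
      have hw2 : HasDerivAt (fun w : ℝ => w^2) (2*v) v := by
        simpa using hasDerivAt_pow 2 v
      exact hw2.const_mul (r^2)
    have hA : HasDerivAt (fun w => (r^2 * w^2) * Real.exp (-(c*w)))
        ((r^2 * (2*v) - c * (r^2 * v^2)) * Real.exp (-(c*v))) v :=
      hasDerivAt_poly_exp c v (fun w => r^2 * w^2) (fun w => r^2 * (2*w)) h0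
    have hφs : HasDerivAt (fun w => φ (u, w)) (pd2 φ (u, v)) v :=
      hasDerivAt_pd2_slice hφ u v
    have hφ2s : HasDerivAt (fun w => pd2 φ (u, w)) (pd2 (pd2 φ) (u, v)) v :=
      hasDerivAt_pd2_slice (contDiff_pd2 hφ) u v
    have := (hA'.mul hφs).sub (hA.mul hφ2s)
    refine this.congr_deriv ?_
    ring
  have hgsmooth : ContDiff ℝ 1 g := by
    have h1 : ContDiff ℝ (⊤ : ℕ∞) g := by
      apply ContDiff.sub
      · exact (by fun_prop : ContDiff ℝ (⊤ : ℕ∞)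
          (fun v : ℝ => r^2 * (2*v - c*v^2) * Real.exp (-(c*v)))).mul (contDiff_slice2 hφ u)
      · exact (by fun_prop : ContDiff ℝ (⊤ : ℕ∞)
          (fun v : ℝ => r^2 * v^2 * Real.exp (-(c*v)))).mul
          (contDiff_slice2 (contDiff_pd2 hφ) u)
    exact h1.of_le (by simp)
  have hgcs : HasCompactSupport g :=
    ((hcs_slice2 hs u).mul_left).comp₂_left
      ((hcs_slice2 (hcs_pd2 hφ hs) u).mul_left) (sub_zero 0)
  have hftc := hgcs.integral_Ioi_deriv_eq hgsmooth 0
  have hderiv_eq : deriv g = fun v =>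
      (r^2 * (2 - 4*(c*v) + (c*v)^2) * Real.exp (-(c*v))) * φ (u, v)
        - (r^2 * v^2 * Real.exp (-(c*v))) * pd2 (pd2 φ) (u, v) :=
    funext fun v => (hgderiv v).deriv
  have hg0 : g 0 = 0 := by simp [hg]
  rw [hderiv_eq, hg0] at hftc
  simp only [neg_zero] at hftc
  have hi1 : IntegrableOn
      (fun v => (r^2 * (2 - 4*(c*v) + (c*v)^2) * Real.exp (-(c*v))) * φ (u, v))
      (Ioi (0:ℝ)) volume :=
    integrableOn_kmul2 _ (by fun_prop) hφ hs u
  have hi2 : IntegrableOn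
      (fun v => (r^2 * v^2 * Real.exp (-(c*v))) * pd2 (pd2 φ) (u, v))
      (Ioi (0:ℝ)) volume :=
    integrableOn_kmul2 _ (by fun_prop) (contDiff_pd2 (contDiff_pd2 hφ)) 
      (hcs_pd2 (contDiff_pd2 hφ) (hcs_pd2 hφ hs)) u
  rw [integral_sub hi1 hi2] at hftc
  have hsub := sub_eq_zero.mp hftc
  calc ∫ v in Ioi (0:ℝ),
        (r^2 * (2 - 4*(r*(u*v)) + (r*(u*v))^2) * Real.exp (-(r*(u*v)))) * φ (u, v)
      = ∫ v in Ioi (0:ℝ),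
        (r^2 * (2 - 4*(c*v) + (c*v)^2) * Real.exp (-(c*v))) * φ (u, v) := by
        congr 1; funext v; rw [show r*(u*v) = c*v by rw [hc, mul_assoc]]
    _ = ∫ v in Ioi (0:ℝ), (r^2 * v^2 * Real.exp (-(c*v))) * pd2 (pd2 φ) (u, v) := hsub
    _ = ∫ v in Ioi (0:ℝ), (r^2 * v^2 * Real.exp (-(r*(u*v)))) * pd2 (pd2 φ) (u, v) := by
        congr 1; funext v; rw [show r*(u*v) = c*v by rw [hc, mul_assoc]]

noncomputable abbrev μI : Measure ℝ := (volume : Measure ℝ).restrict (Ioi 0)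

lemma integrable_prod_kmul (k : ℝ × ℝ → ℝ) (hk : Continuous k) {f : ℝ × ℝ → ℝ}
    (hf : ContDiff ℝ (⊤ : ℕ∞) f) (hs : HasCompactSupport f) :
    Integrable (fun p : ℝ × ℝ => k p * f p) (μI.prod μI) := by
  have hc : Continuous fun p : ℝ × ℝ => k p * f p := hk.mul hf.continuous
  have hcs : HasCompactSupport (fun p : ℝ × ℝ => k p * f p) := hs.mul_left
  have hint : Integrable (fun p : ℝ × ℝ => k p * f p) volume :=
    hc.integrable_of_hasCompactSupport hcs
  rw [μI, Measure.prod_restrict, ← MeasureTheory.Measure.volume_eq_prod]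
  exact hint.restrict

lemma swap_kmul (k : ℝ × ℝ → ℝ) (hk : Continuous k) {f : ℝ × ℝ → ℝ}
    (hf : ContDiff ℝ (⊤ : ℕ∞) f) (hs : HasCompactSupport f) :
    ∫ u in Ioi (0:ℝ), ∫ v in Ioi (0:ℝ), k (u, v) * f (u, v)
      = ∫ v in Ioi (0:ℝ), ∫ u in Ioi (0:ℝ), k (u, v) * f (u, v) := by
  apply integral_integral_swap
  have h2 : (Function.uncurry fun u v => k (u, v) * f (u, v))
      = fun p : ℝ × ℝ => k p * f p := by
    funext p; simp [Function.uncurry]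
  rw [h2]
  exact integrable_prod_kmul k hk hf hs

lemma integrable_inner_v (k : ℝ × ℝ → ℝ) (hk : Continuous k) {f : ℝ × ℝ → ℝ}
    (hf : ContDiff ℝ (⊤ : ℕ∞) f) (hs : HasCompactSupport f) :
    Integrable (fun u => ∫ v in Ioi (0:ℝ), k (u, v) * f (u, v)) μI :=
  (integrable_prod_kmul k hk hf hs).integral_prod_left

lemma integrable_inner_u (k : ℝ × ℝ → ℝ) (hk : Continuous k) {f : ℝ × ℝ → ℝ}
    (hf : ContDiff ℝ (⊤ : ℕ∞) f) (hs : HasCompactSupport f) :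
    Integrable (fun v => ∫ u in Ioi (0:ℝ), k (u, v) * f (u, v)) μI :=
  (integrable_prod_kmul k hk hf hs).integral_prod_right

lemma stepC (r : ℝ) {ψ : ℝ × ℝ → ℝ} (hψ : ContDiff ℝ (⊤ : ℕ∞) ψ) (hs : HasCompactSupport ψ)
    (v : ℝ) :
    ∫ u in Ioi (0:ℝ), (r^2 * v^2 * Real.exp (-(r*(u*v)))) * ψ (u, v)
      = r * v * ψ (0, v) + pd1 ψ (0, v)
        + ∫ u in Ioi (0:ℝ), Real.exp (-(r*(u*v))) * pd1 (pd1 ψ) (u, v) := by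
  set c : ℝ := r * v with hc
  have hexp : ∀ w : ℝ, r * (w * v) = c * w := by
    intro w; rw [hc]; ring
  set g : ℝ → ℝ := fun u =>
      ((-c) * Real.exp (-(c*u))) * ψ (u, v) - Real.exp (-(c*u)) * pd1 ψ (u, v) with hg
  have hgderiv : ∀ u : ℝ, HasDerivAt g
      ((c^2 * Real.exp (-(c*u))) * ψ (u, v)
        - Real.exp (-(c*u)) * pd1 (pd1 ψ) (u, v)) u := by
    intro u
    have hK' : HasDerivAt (fun w => (-c) * Real.exp (-(c*w))) (c^2 * Real.exp (-(c*u))) u := by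
      have h := hasDerivAt_poly_exp c u (fun _ => -c) (fun _ => 0) (hasDerivAt_const u (-c))
      have h2 : (fun w => (fun _ : ℝ => -c) w * Real.exp (-(c*w)))
          = fun w => (-c) * Real.exp (-(c*w)) := rfl
      rw [h2] at h
      convert h using 1
      ring
    have hK : HasDerivAt (fun w => Real.exp (-(c*w))) ((-c) * Real.exp (-(c*u))) u := by
      have h := hasDerivAt_poly_exp c u (fun _ => 1) (fun _ => 0) (hasDerivAt_const u (1:ℝ))
      have h2 : (fun w => (fun _ : ℝ => (1:ℝ)) w * Real.exp (-(c*w)))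
          = fun w => Real.exp (-(c*w)) := by funext w; simp
      rw [h2] at h
      convert h using 1
      ring
    have hψs : HasDerivAt (fun w => ψ (w, v)) (pd1 ψ (u, v)) u :=
      hasDerivAt_pd1_slice hψ u v
    have hψ1s : HasDerivAt (fun w => pd1 ψ (w, v)) (pd1 (pd1 ψ) (u, v)) u :=
      hasDerivAt_pd1_slice (contDiff_pd1 hψ) u v
    have := (hK'.mul hψs).sub (hK.mul hψ1s)
    refine this.congr_deriv ?_
    ring
  have hgsmooth : ContDiff ℝ 1 g := by
    have h1 : ContDiff ℝ (⊤ : ℕ∞) g := by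
      apply ContDiff.sub
      · exact (by fun_prop : ContDiff ℝ (⊤ : ℕ∞)
          (fun u : ℝ => (-c) * Real.exp (-(c*u)))).mul (contDiff_slice1 hψ v)
      · exact (by fun_prop : ContDiff ℝ (⊤ : ℕ∞)
          (fun u : ℝ => Real.exp (-(c*u)))).mul (contDiff_slice1 (contDiff_pd1 hψ) v)
    exact h1.of_le (by simp)
  have hgcs : HasCompactSupport g :=
    ((hcs_slice1 hs v).mul_left).comp₂_left
      ((hcs_slice1 (hcs_pd1 hψ hs) v).mul_left) (sub_zero 0)
  have hftc := hgcs.integral_Ioi_deriv_eq hgsmooth 0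
  have hderiv_eq : deriv g = fun u =>
      (c^2 * Real.exp (-(c*u))) * ψ (u, v)
        - Real.exp (-(c*u)) * pd1 (pd1 ψ) (u, v) :=
    funext fun u => (hgderiv u).deriv
  have hg0 : g 0 = (-c) * ψ (0, v) - pd1 ψ (0, v) := by simp [hg]
  rw [hderiv_eq, hg0] at hftc
  have hi1 : IntegrableOn (fun u => (c^2 * Real.exp (-(c*u))) * ψ (u, v))
      (Ioi (0:ℝ)) volume :=
    integrableOn_kmul1 _ (by fun_prop) hψ hs v
  have hi2 : IntegrableOn (fun u => Real.exp (-(c*u)) * pd1 (pd1 ψ) (u, v))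
      (Ioi (0:ℝ)) volume :=
    integrableOn_kmul1 _ (by fun_prop) (contDiff_pd1 (contDiff_pd1 hψ))
      (hcs_pd1 (contDiff_pd1 hψ) (hcs_pd1 hψ hs)) v
  rw [integral_sub hi1 hi2] at hftc
  have key : ∫ u in Ioi (0:ℝ), (c^2 * Real.exp (-(c*u))) * ψ (u, v)
      = c * ψ (0, v) + pd1 ψ (0, v)
        + ∫ u in Ioi (0:ℝ), Real.exp (-(c*u)) * pd1 (pd1 ψ) (u, v) := by
    have := hftc
    linarith [this]
  calc ∫ u in Ioi (0:ℝ), (r^2 * v^2 * Real.exp (-(r*(u*v)))) * ψ (u, v)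
      = ∫ u in Ioi (0:ℝ), (c^2 * Real.exp (-(c*u))) * ψ (u, v) := by
        congr 1; funext u; rw [hexp u, show r^2 * v^2 = c^2 by rw [hc]; ring]
    _ = c * ψ (0, v) + pd1 ψ (0, v)
        + ∫ u in Ioi (0:ℝ), Real.exp (-(c*u)) * pd1 (pd1 ψ) (u, v) := key
    _ = r * v * ψ (0, v) + pd1 ψ (0, v)
        + ∫ u in Ioi (0:ℝ), Real.exp (-(r*(u*v))) * pd1 (pd1 ψ) (u, v) := by
        rw [hc]
        congr 1
        congr 1
        funext u
        rw [hexp u]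

lemma stepD1 (r : ℝ) {φ : ℝ × ℝ → ℝ} (hφ : ContDiff ℝ (⊤ : ℕ∞) φ) (hs : HasCompactSupport φ) :
    ∫ v in Ioi (0:ℝ), r * v * pd2 (pd2 φ) (0, v) = r * φ (0, 0) := by
  set g : ℝ → ℝ := fun v => r * (v * pd2 φ (0, v) - φ (0, v)) with hg
  have hgderiv : ∀ v : ℝ, HasDerivAt g (r * v * pd2 (pd2 φ) (0, v)) v := by
    intro v
    have hφs : HasDerivAt (fun w => φ (0, w)) (pd2 φ (0, v)) v :=
      hasDerivAt_pd2_slice hφ 0 v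
    have hφ2s : HasDerivAt (fun w => pd2 φ (0, w)) (pd2 (pd2 φ) (0, v)) v :=
      hasDerivAt_pd2_slice (contDiff_pd2 hφ) 0 v
    have hw : HasDerivAt (fun w : ℝ => w) 1 v := hasDerivAt_id v
    have := (((hw.mul hφ2s).sub hφs).const_mul r)
    refine this.congr_deriv ?_
    ring
  have hgsmooth : ContDiff ℝ 1 g := by
    have h1 : ContDiff ℝ (⊤ : ℕ∞) g := by
      apply ContDiff.mul contDiff_const
      exact (contDiff_id.mul (contDiff_slice2 (contDiff_pd2 hφ) 0)).sub (contDiff_slice2 hφ 0)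
    exact h1.of_le (by simp)
  have hgcs : HasCompactSupport g := by
    apply HasCompactSupport.mul_left (f' := fun v => v * pd2 φ (0, v) - φ (0, v))
    exact ((hcs_slice2 (hcs_pd2 hφ hs) 0).mul_left).comp₂_left
      (hcs_slice2 hs 0) (sub_zero 0)
  have hftc := hgcs.integral_Ioi_deriv_eq hgsmooth 0
  have hderiv_eq : deriv g = fun v => r * v * pd2 (pd2 φ) (0, v) :=
    funext fun v => (hgderiv v).deriv
  have hg0 : g 0 = -(r * φ (0, 0)) := by simp [hg]
  rw [hderiv_eq, hg0, neg_neg] at hftc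
  exact hftc

lemma stepD2 {ψ : ℝ × ℝ → ℝ} (hψ : ContDiff ℝ (⊤ : ℕ∞) ψ) (hs : HasCompactSupport ψ) :
    ∫ v in Ioi (0:ℝ), pd2 ψ (0, v) = - ψ (0, 0) := by
  set g : ℝ → ℝ := fun v => ψ (0, v) with hg
  have hgderiv : ∀ v : ℝ, HasDerivAt g (pd2 ψ (0, v)) v := fun v =>
    hasDerivAt_pd2_slice hψ 0 v
  have hgsmooth : ContDiff ℝ 1 g := (contDiff_slice2 hψ 0).of_le (by simp)
  have hgcs : HasCompactSupport g := hcs_slice2 hs 0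
  have hftc := hgcs.integral_Ioi_deriv_eq hgsmooth 0
  have hderiv_eq : deriv g = fun v => pd2 ψ (0, v) :=
    funext fun v => (hgderiv v).deriv
  rw [hderiv_eq] at hftc
  exact hftc

lemma boxOp_eq (φ : ℝ × ℝ → ℝ) : boxOp φ = fun p => -2 * pd1 (pd2 φ) p := rfl

lemma pd2_const_mul (c : ℝ) (h : ℝ × ℝ → ℝ) :
    pd2 (fun q => c * h q) = fun q => c * pd2 h q := by
  funext q
  exact deriv_const_mul_field c

lemma pd1_const_mul (c : ℝ) (h : ℝ × ℝ → ℝ) :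
    pd1 (fun q => c * h q) = fun q => c * pd1 h q := by
  funext q
  exact deriv_const_mul_field c

lemma boxbox (φ : ℝ × ℝ → ℝ) (hφ : ContDiff ℝ (⊤ : ℕ∞) φ) :
    boxOp (boxOp φ) = fun p => 4 * pd1 (pd1 (pd2 (pd2 φ))) p := by
  rw [boxOp_eq, boxOp_eq φ, pd2_const_mul, pd1_const_mul,
    ← pd_comm (contDiff_pd2 hφ)]
  funext p
  ring

lemma integral_congr_forall {f g : ℝ → ℝ} (h : ∀ x, f x = g x) :
    ∫ x in Ioi (0:ℝ), f x = ∫ x in Ioi (0:ℝ), g x :=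
  integral_congr_ae (Filter.Eventually.of_forall fun x => h x)

/-- Exact integral equation for the sprinkling expectation of the causal set
d'Alembertian in 2d Minkowski space.  With `z` at the origin of light-cone
coordinates, `J⁻(z)` the first quadrant, `V[y,z] = uv`, `ρ = 1/l²`, and
`Eₙ = ρ^{n-1}/(n-2)! ∫_{J⁻(z)} e^{-ρV} V^{n-2} φ`, the expectation
`Eφ(z) = (4/l²)(-(1/2)φ(z) + E₂ - 2E₃ + E₄)` satisfies
`Eφ(z) = □φ(z) + (1/2)∫_{J⁻(z)} e^{-ρV[y,z]} □□φ(y) d²y`. -/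
theorem causet_box_expectation_flat (l : ℝ) (hl : 0 < l)
    (φ : ℝ × ℝ → ℝ) (hφ : ContDiff ℝ (⊤ : ℕ∞) φ) (hsupp : HasCompactSupport φ) :
    (4 / l ^ 2) *
      (-(1 / 2) * φ (0, 0)
        + (1 / l ^ 2) *
            (∫ u in Ioi (0:ℝ), ∫ v in Ioi (0:ℝ),
              Real.exp (-((1 / l ^ 2) * (u * v))) * φ (u, v))
        - 2 * ((1 / l ^ 2) ^ 2 *
            (∫ u in Ioi (0:ℝ), ∫ v in Ioi (0:ℝ),
              Real.exp (-((1 / l ^ 2) * (u * v))) * (u * v) * φ (u, v)))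
        + (1 / l ^ 2) ^ 3 / 2 *
            (∫ u in Ioi (0:ℝ), ∫ v in Ioi (0:ℝ),
              Real.exp (-((1 / l ^ 2) * (u * v))) * (u * v) ^ 2 * φ (u, v)))
      = boxOp φ (0, 0)
        + (1 / 2) * ∫ u in Ioi (0:ℝ), ∫ v in Ioi (0:ℝ),
            Real.exp (-((1 / l ^ 2) * (u * v))) * boxOp (boxOp φ) (u, v) := by
  set r : ℝ := 1 / l ^ 2 with hrdef
  have hψc : ContDiff ℝ (⊤ : ℕ∞) (pd2 (pd2 φ)) := contDiff_pd2 (contDiff_pd2 hφ)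
  have hψs : HasCompactSupport (pd2 (pd2 φ)) := hcs_pd2 (contDiff_pd2 hφ) (hcs_pd2 hφ hsupp)
  have hχc : ContDiff ℝ (⊤ : ℕ∞) (pd1 (pd1 (pd2 (pd2 φ)))) :=
    contDiff_pd1 (contDiff_pd1 hψc)
  have hχs : HasCompactSupport (pd1 (pd1 (pd2 (pd2 φ)))) :=
    hcs_pd1 (contDiff_pd1 hψc) (hcs_pd1 hψc hψs)
  set X0 : ℝ := ∫ u in Ioi (0:ℝ), ∫ v in Ioi (0:ℝ),
      Real.exp (-(r * (u * v))) * φ (u, v) with hX0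
  set X1 : ℝ := ∫ u in Ioi (0:ℝ), ∫ v in Ioi (0:ℝ),
      Real.exp (-(r * (u * v))) * (u * v) * φ (u, v) with hX1
  set X2 : ℝ := ∫ u in Ioi (0:ℝ), ∫ v in Ioi (0:ℝ),
      Real.exp (-(r * (u * v))) * (u * v) ^ 2 * φ (u, v) with hX2
  set T : ℝ := ∫ u in Ioi (0:ℝ), ∫ v in Ioi (0:ℝ),
      (r^2 * (2 - 4*(r*(u*v)) + (r*(u*v))^2) * Real.exp (-(r*(u*v)))) * φ (u, v) with hT
  set D : ℝ := ∫ u in Ioi (0:ℝ), ∫ v in Ioi (0:ℝ),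
      Real.exp (-(r*(u*v))) * pd1 (pd1 (pd2 (pd2 φ))) (u, v) with hD
  -- Step 1: combine the LHS into the single double integral T
  have comb : T = 2*r^2*X0 - 4*r^3*X1 + r^4*X2 := by
    have inner : ∀ u : ℝ,
        (∫ v in Ioi (0:ℝ),
          (r^2 * (2 - 4*(r*(u*v)) + (r*(u*v))^2) * Real.exp (-(r*(u*v)))) * φ (u, v))
        = 2*r^2 * (∫ v in Ioi (0:ℝ), Real.exp (-(r * (u * v))) * φ (u, v))
          - 4*r^3 * (∫ v in Ioi (0:ℝ), Real.exp (-(r * (u * v))) * (u * v) * φ (u, v))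
          + r^4 * (∫ v in Ioi (0:ℝ), Real.exp (-(r * (u * v))) * (u * v) ^ 2 * φ (u, v)) := by
      intro u
      have hi0 : IntegrableOn (fun v => Real.exp (-(r * (u * v))) * φ (u, v))
          (Ioi (0:ℝ)) volume := by
        exact integrableOn_kmul2 _ (by fun_prop) hφ hsupp u
      have hi1 : IntegrableOn (fun v => Real.exp (-(r * (u * v))) * (u * v) * φ (u, v))
          (Ioi (0:ℝ)) volume := by
        exact integrableOn_kmul2 (fun v => Real.exp (-(r * (u * v))) * (u * v))
          (by fun_prop) hφ hsupp u
      have hi2 : IntegrableOn (fun v => Real.exp (-(r * (u * v))) * (u * v) ^ 2 * φ (u, v))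
          (Ioi (0:ℝ)) volume := by
        exact integrableOn_kmul2 (fun v => Real.exp (-(r * (u * v))) * (u * v) ^ 2)
          (by fun_prop) hφ hsupp u
      have hi01 : IntegrableOn
          (fun v => 2*r^2 * (Real.exp (-(r * (u * v))) * φ (u, v))
            - 4*r^3 * (Real.exp (-(r * (u * v))) * (u * v) * φ (u, v)))
          (Ioi (0:ℝ)) volume := by
        exact (hi0.const_mul _).sub (hi1.const_mul _)
      have hi2' : IntegrableOn
          (fun v => r^4 * (Real.exp (-(r * (u * v))) * (u * v) ^ 2 * φ (u, v)))
          (Ioi (0:ℝ)) volume := by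
        exact hi2.const_mul _
      calc (∫ v in Ioi (0:ℝ),
            (r^2 * (2 - 4*(r*(u*v)) + (r*(u*v))^2) * Real.exp (-(r*(u*v)))) * φ (u, v))
          = ∫ v in Ioi (0:ℝ),
            ((2*r^2 * (Real.exp (-(r * (u * v))) * φ (u, v))
              - 4*r^3 * (Real.exp (-(r * (u * v))) * (u * v) * φ (u, v)))
              + r^4 * (Real.exp (-(r * (u * v))) * (u * v) ^ 2 * φ (u, v))) :=
            integral_congr_forall (fun v => by ring)
        _ = (∫ v in Ioi (0:ℝ),
              (2*r^2 * (Real.exp (-(r * (u * v))) * φ (u, v))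
                - 4*r^3 * (Real.exp (-(r * (u * v))) * (u * v) * φ (u, v))))
            + ∫ v in Ioi (0:ℝ),
              r^4 * (Real.exp (-(r * (u * v))) * (u * v) ^ 2 * φ (u, v)) :=
            integral_add hi01 hi2'
        _ = ((∫ v in Ioi (0:ℝ), 2*r^2 * (Real.exp (-(r * (u * v))) * φ (u, v)))
            - ∫ v in Ioi (0:ℝ),
                4*r^3 * (Real.exp (-(r * (u * v))) * (u * v) * φ (u, v)))
            + ∫ v in Ioi (0:ℝ),
              r^4 * (Real.exp (-(r * (u * v))) * (u * v) ^ 2 * φ (u, v)) := by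
            rw [integral_sub (hi0.const_mul _) (hi1.const_mul _)]
        _ = _ := by rw [integral_const_mul, integral_const_mul, integral_const_mul]
    have J0 : Integrable (fun u => ∫ v in Ioi (0:ℝ),
        Real.exp (-(r * (u * v))) * φ (u, v)) μI := by
      exact integrable_inner_v (fun p => Real.exp (-(r * (p.1 * p.2)))) (by fun_prop) hφ hsupp
    have J1 : Integrable (fun u => ∫ v in Ioi (0:ℝ),
        Real.exp (-(r * (u * v))) * (u * v) * φ (u, v)) μI := by
      exact integrable_inner_v
        (fun p => Real.exp (-(r * (p.1 * p.2))) * (p.1 * p.2)) (by fun_prop) hφ hsupp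
    have J2 : Integrable (fun u => ∫ v in Ioi (0:ℝ),
        Real.exp (-(r * (u * v))) * (u * v) ^ 2 * φ (u, v)) μI := by
      exact integrable_inner_v
        (fun p => Real.exp (-(r * (p.1 * p.2))) * (p.1 * p.2) ^ 2) (by fun_prop) hφ hsupp
    have J01 : Integrable (fun u =>
        2*r^2 * (∫ v in Ioi (0:ℝ), Real.exp (-(r * (u * v))) * φ (u, v))
        - 4*r^3 * (∫ v in Ioi (0:ℝ), Real.exp (-(r * (u * v))) * (u * v) * φ (u, v))) μI := by
      exact (J0.const_mul _).sub (J1.const_mul _)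
    have J2' : Integrable (fun u =>
        r^4 * (∫ v in Ioi (0:ℝ), Real.exp (-(r * (u * v))) * (u * v) ^ 2 * φ (u, v))) μI := by
      exact J2.const_mul _
    calc T = ∫ u in Ioi (0:ℝ),
          ((2*r^2 * (∫ v in Ioi (0:ℝ), Real.exp (-(r * (u * v))) * φ (u, v))
            - 4*r^3 * (∫ v in Ioi (0:ℝ), Real.exp (-(r * (u * v))) * (u * v) * φ (u, v)))
            + r^4 * (∫ v in Ioi (0:ℝ), Real.exp (-(r * (u * v))) * (u * v) ^ 2 * φ (u, v))) := by
          rw [hT]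
          exact integral_congr_forall (fun u => inner u)
      _ = (∫ u in Ioi (0:ℝ),
            (2*r^2 * (∫ v in Ioi (0:ℝ), Real.exp (-(r * (u * v))) * φ (u, v))
            - 4*r^3 * (∫ v in Ioi (0:ℝ), Real.exp (-(r * (u * v))) * (u * v) * φ (u, v))))
          + ∫ u in Ioi (0:ℝ),
            r^4 * (∫ v in Ioi (0:ℝ), Real.exp (-(r * (u * v))) * (u * v) ^ 2 * φ (u, v)) :=
          integral_add J01 J2'
      _ = ((∫ u in Ioi (0:ℝ),
            2*r^2 * (∫ v in Ioi (0:ℝ), Real.exp (-(r * (u * v))) * φ (u, v)))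
          - ∫ u in Ioi (0:ℝ),
            4*r^3 * (∫ v in Ioi (0:ℝ), Real.exp (-(r * (u * v))) * (u * v) * φ (u, v)))
          + ∫ u in Ioi (0:ℝ),
            r^4 * (∫ v in Ioi (0:ℝ), Real.exp (-(r * (u * v))) * (u * v) ^ 2 * φ (u, v)) := by
          rw [integral_sub (J0.const_mul _) (J1.const_mul _)]
      _ = 2*r^2*X0 - 4*r^3*X1 + r^4*X2 := by
          rw [integral_const_mul, integral_const_mul, integral_const_mul, hX0, hX1, hX2]
  -- Step 2: integration by parts, twice in each variable
  have keyT : T = r * φ (0, 0) - pd1 (pd2 φ) (0, 0) + D := by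
    have hA : IntegrableOn (fun v => r * v * pd2 (pd2 φ) (0, v)) (Ioi (0:ℝ)) volume := by
      exact integrableOn_kmul2 (fun v => r * v) (by fun_prop) hψc hψs 0
    have hB : IntegrableOn (fun v => pd1 (pd2 (pd2 φ)) (0, v)) (Ioi (0:ℝ)) volume := by
      exact ((contDiff_slice2 (contDiff_pd1 hψc) 0).continuous.integrable_of_hasCompactSupport
        (hcs_slice2 (hcs_pd1 hψc hψs) 0)).integrableOn
    have hC : IntegrableOn (fun v => ∫ u in Ioi (0:ℝ),
        Real.exp (-(r*(u*v))) * pd1 (pd1 (pd2 (pd2 φ))) (u, v)) (Ioi (0:ℝ)) volume := by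
      exact integrable_inner_u (fun p => Real.exp (-(r * (p.1 * p.2)))) (by fun_prop) hχc hχs
    have hAB : IntegrableOn (fun v => r * v * pd2 (pd2 φ) (0, v)
        + pd1 (pd2 (pd2 φ)) (0, v)) (Ioi (0:ℝ)) volume := by
      exact hA.add hB
    have hS2 : (∫ v in Ioi (0:ℝ), pd1 (pd2 (pd2 φ)) (0, v)) = - pd1 (pd2 φ) (0, 0) := by
      rw [pd_comm (contDiff_pd2 hφ)]
      exact stepD2 (contDiff_pd1 (contDiff_pd2 hφ))
        (hcs_pd1 (contDiff_pd2 hφ) (hcs_pd2 hφ hsupp))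
    calc T = ∫ u in Ioi (0:ℝ), ∫ v in Ioi (0:ℝ),
          (r^2 * v^2 * Real.exp (-(r*(u*v)))) * pd2 (pd2 φ) (u, v) := by
          rw [hT]
          exact integral_congr_forall (fun u => stepA r hφ hsupp u)
      _ = ∫ v in Ioi (0:ℝ), ∫ u in Ioi (0:ℝ),
          (r^2 * v^2 * Real.exp (-(r*(u*v)))) * pd2 (pd2 φ) (u, v) := by
        exact swap_kmul (fun p => r^2 * p.2^2 * Real.exp (-(r*(p.1*p.2))))
          (by fun_prop) hψc hψs
      _ = ∫ v in Ioi (0:ℝ),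
          ((r * v * pd2 (pd2 φ) (0, v) + pd1 (pd2 (pd2 φ)) (0, v))
            + ∫ u in Ioi (0:ℝ),
                Real.exp (-(r*(u*v))) * pd1 (pd1 (pd2 (pd2 φ))) (u, v)) :=
        integral_congr_forall (fun v => stepC r hψc hψs v)
      _ = (∫ v in Ioi (0:ℝ), (r * v * pd2 (pd2 φ) (0, v) + pd1 (pd2 (pd2 φ)) (0, v)))
          + (∫ v in Ioi (0:ℝ), ∫ u in Ioi (0:ℝ),
              Real.exp (-(r*(u*v))) * pd1 (pd1 (pd2 (pd2 φ))) (u, v)) :=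
        integral_add hAB hC
      _ = ((∫ v in Ioi (0:ℝ), r * v * pd2 (pd2 φ) (0, v))
          + (∫ v in Ioi (0:ℝ), pd1 (pd2 (pd2 φ)) (0, v)))
          + (∫ v in Ioi (0:ℝ), ∫ u in Ioi (0:ℝ),
              Real.exp (-(r*(u*v))) * pd1 (pd1 (pd2 (pd2 φ))) (u, v)) := by
        rw [integral_add hA hB]
      _ = r * φ (0, 0) - pd1 (pd2 φ) (0, 0) + D := by
        rw [stepD1 r hφ hsupp, hS2, hD]
        have hswap := swap_kmul (fun p => Real.exp (-(r * (p.1 * p.2))))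
          (f := pd1 (pd1 (pd2 (pd2 φ)))) (by fun_prop) hχc hχs
        rw [← hswap]
        ring
  -- Step 3: identify the RHS
  have hbox0 : boxOp φ (0, 0) = -2 * pd1 (pd2 φ) (0, 0) := rfl
  have hRHS : boxOp φ (0, 0)
      + (1 / 2) * ∫ u in Ioi (0:ℝ), ∫ v in Ioi (0:ℝ),
          Real.exp (-(r * (u * v))) * boxOp (boxOp φ) (u, v)
      = -2 * pd1 (pd2 φ) (0, 0) + 2 * D := by
    have hinner : ∀ u : ℝ,
        (∫ v in Ioi (0:ℝ), Real.exp (-(r * (u * v))) * boxOp (boxOp φ) (u, v))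
        = 4 * ∫ v in Ioi (0:ℝ),
            Real.exp (-(r*(u*v))) * pd1 (pd1 (pd2 (pd2 φ))) (u, v) := by
      intro u
      rw [← integral_const_mul]
      exact integral_congr_forall (fun v => by rw [boxbox φ hφ]; ring)
    have houter : (∫ u in Ioi (0:ℝ), ∫ v in Ioi (0:ℝ),
        Real.exp (-(r * (u * v))) * boxOp (boxOp φ) (u, v)) = 4 * D := by
      rw [hD, ← integral_const_mul]
      exact integral_congr_forall (fun u => hinner u)
    rw [hbox0, houter]
    ring
  calc (4 / l ^ 2) *
      (-(1 / 2) * φ (0, 0) + r * X0 - 2 * (r ^ 2 * X1) + r ^ 3 / 2 * X2)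
      = -2*r*φ (0, 0) + 2*T := by
        rw [comb, show (4:ℝ) / l ^ 2 = 4 * r by rw [hrdef]; ring]
        ring
    _ = -2*r*φ (0, 0) + 2*(r * φ (0, 0) - pd1 (pd2 φ) (0, 0) + D) := by rw [keyT]
    _ = -2 * pd1 (pd2 φ) (0, 0) + 2 * D := by ring
    _ = _ := hRHS.symm
end

section
/- In 2d Minkowski spacetime, for a point z and a point y in its causal past with light-cone separation (U,V) (U,V > 0), the quantity β₀ := −(1/2)∫_{∂[y,z]} dΣ_μ ∇^μ(e^{-ρσ}), computed by reducing the flux integral to endpoint evaluations along the four null boundary edges, equals −1 + e^{-ρσ(y,z)} = −1 + e^{-ρUV}. -/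
set_option autoImplicit false

open MeasureTheory Real intervalIntegral

theorem beta0_flat_general (ρ U V : ℝ) :
    -(1 / 2) * (-((∫ v in (0:ℝ)..V, deriv (fun w => Real.exp (-(ρ * (U * w)))) v)
        + (∫ u in (0:ℝ)..U, deriv (fun w => Real.exp (-(ρ * (w * V)))) u)
        + (∫ v in (0:ℝ)..V, deriv (fun _ : ℝ => Real.exp (-(ρ * 0))) v)
        + (∫ u in (0:ℝ)..U, deriv (fun _ : ℝ => Real.exp (-(ρ * 0))) u)))
      = -1 + Real.exp (-(ρ * (U * V))) := by
  simp (disch := fun_prop) only [integral_deriv_of_contDiffOn_uIcc]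
  simp only [mul_zero, neg_zero, exp_zero, sub_self, mul_comm _ V]
  ring

/-- In 2d Minkowski space, for `z` and `y ∈ J⁻(z)` with light-cone separation
`(U,V)`, the boundary quantity `β₀ := -(1/2)∫_{∂[y,z]} dΣ_μ ∇^μ(e^{-ρσ})`, computed
by reducing the flux integral to (oriented) total-derivative integrals along the
four null boundary edges — on which `σ(·,z)` equals `U·w`, `w·V`, and `0`, `0`
respectively — equals `-1 + e^{-ρσ(y,z)} = -1 + e^{-ρUV}`. -/
theorem beta0_flat (ρ U V : ℝ) (hρ : 0 < ρ) (hU : 0 < U) (hV : 0 < V) :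
    -(1 / 2) * (-((∫ v in (0:ℝ)..V, deriv (fun w => Real.exp (-(ρ * (U * w)))) v)
        + (∫ u in (0:ℝ)..U, deriv (fun w => Real.exp (-(ρ * (w * V)))) u)
        + (∫ v in (0:ℝ)..V, deriv (fun _ : ℝ => Real.exp (-(ρ * 0))) v)
        + (∫ u in (0:ℝ)..U, deriv (fun _ : ℝ => Real.exp (-(ρ * 0))) u)))
      = -1 + Real.exp (-(ρ * (U * V))) :=
  beta0_flat_general ρ U V
end
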